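/- Let a_X < b_X and a_Y < b_Y be real numbers. Then Unif[a_X, b_X] second-order stochastically dominates Unif[a_Y, b_Y] if and only if a_X ≥ a_Y and (a_X + b_X)/2 ≥ (a_Y + b_Y)/2 (i.e. the means are ordered). -/

import Mathlib

/-
The integrated distribution function `u ↦ ∫_{(-∞, u]} F` of `Unif[a, b]` is `0` up to `a`,
`(u - a)² / (2 (b - a))` on `[a, b]`, and `u - (a + b) / 2` from `b` on. Dominance at
`u = min a_Y b_X` forces `a_Y ≤ a_X`, and dominance for large `u` compares the means. Conversely,
under these two conditions the comparison of the explicit formulas is an elementary polynomial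
inequality in each of the regimes of `u`.
-/

open MeasureTheory ProbabilityTheory
open scoped NNReal ENNReal

/-- `P` second-order stochastically dominates `Q`. -/
def SSD (P Q : Measure ℝ) : Prop :=
  ∀ u : ℝ, (∫ z in Set.Iic u, (cdf P z - cdf Q z)) ≤ 0

/-- The uniform probability measure on the interval `[a, b]`. -/
noncomputable def unif (a b : ℝ) : Measure ℝ :=
  (ENNReal.ofReal (b - a))⁻¹ • (volume.restrict (Set.Icc a b))

open Set

lemma ssd_iff_forall_setIntegral_cdf_le {P Q : Measure ℝ}
    (hP : ∀ u, IntegrableOn (cdf P) (Iic u)) (hQ : ∀ u, IntegrableOn (cdf Q) (Iic u)) :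
    SSD P Q ↔ ∀ u, ∫ z in Iic u, cdf P z ≤ ∫ z in Iic u, cdf Q z := by
  simp only [SSD, integral_sub (hP _) (hQ _), sub_nonpos]

section Uniform

variable {a b : ℝ}

lemma isProbabilityMeasure_unif (hab : a < b) : IsProbabilityMeasure (unif a b) := by
  constructor
  rw [unif, Measure.smul_apply, Measure.restrict_apply_univ, Real.volume_Icc, smul_eq_mul,
    ENNReal.inv_mul_cancel (by simpa using hab) ENNReal.ofReal_ne_top]

variable (a b) in
noncomputable def unifCDF (z : ℝ) : ℝ := max (min z b - a) 0 / (b - a)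

lemma cdf_unif (hab : a < b) : ⇑(cdf (unif a b)) = unifCDF a b := by
  have := isProbabilityMeasure_unif hab
  ext z
  have hIic : Iic z ∩ Icc a b = Icc a (min z b) := by
    ext x; simp only [mem_inter_iff, mem_Iic, mem_Icc, le_min_iff]; tauto
  rw [cdf_eq_real, measureReal_def, unif, Measure.smul_apply,
    Measure.restrict_apply measurableSet_Iic, hIic, Real.volume_Icc, smul_eq_mul,
    ENNReal.toReal_mul, ENNReal.toReal_inv, ENNReal.toReal_ofReal (sub_nonneg.2 hab.le),
    ENNReal.toReal_ofReal', unifCDF, inv_mul_eq_div]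

lemma continuous_unifCDF : Continuous (unifCDF a b) := by
  unfold unifCDF; fun_prop

lemma unifCDF_nonneg (hab : a < b) (z : ℝ) : 0 ≤ unifCDF a b z :=
  div_nonneg (le_max_right _ _) (sub_nonneg.2 hab.le)

lemma unifCDF_of_le_left {z : ℝ} (hz : z ≤ a) : unifCDF a b z = 0 := by
  rw [unifCDF, max_eq_right (by linarith [min_le_left z b]), zero_div]

lemma unifCDF_of_mem_Icc {z : ℝ} (hz : z ∈ Icc a b) : unifCDF a b z = (z - a) / (b - a) := by
  rw [unifCDF, min_eq_left hz.2, max_eq_left (sub_nonneg.2 hz.1)]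

lemma unifCDF_of_right_le (hab : a < b) {z : ℝ} (hz : b ≤ z) : unifCDF a b z = 1 := by
  rw [unifCDF, min_eq_right hz, max_eq_left (sub_nonneg.2 hab.le), div_self (sub_ne_zero.2 hab.ne')]

variable (a b) in
lemma integrableOn_unifCDF_Iic (u : ℝ) : IntegrableOn (unifCDF a b) (Iic u) := by
  have hzero : IntegrableOn (unifCDF a b) (Iic a) :=
    integrableOn_zero.congr_fun (fun z hz => (unifCDF_of_le_left hz).symm) measurableSet_Iic
  rcases le_total u a with hu | hu
  · exact hzero.mono_set (Iic_subset_Iic.2 hu)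
  · rw [← Iic_union_Ioc_eq_Iic hu]
    exact hzero.union continuous_unifCDF.integrableOn_Ioc

lemma setIntegral_Iic_unifCDF_of_le_left {u : ℝ} (hu : u ≤ a) :
    ∫ z in Iic u, unifCDF a b z = 0 := by
  rw [setIntegral_congr_fun measurableSet_Iic
    (fun z hz => unifCDF_of_le_left (b := b) (le_trans hz hu)), integral_zero]

lemma setIntegral_Iic_unifCDF_of_mem_Icc {u : ℝ} (hu : u ∈ Icc a b) :
    ∫ z in Iic u, unifCDF a b z = (u - a) ^ 2 / (2 * (b - a)) := by
  have hsplit := intervalIntegral.integral_Iic_sub_Iic (integrableOn_unifCDF_Iic a b a)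
    (integrableOn_unifCDF_Iic a b u)
  rw [setIntegral_Iic_unifCDF_of_le_left le_rfl, sub_zero] at hsplit
  rw [hsplit, intervalIntegral.integral_congr (g := fun z => (z - a) / (b - a))
    fun z hz => unifCDF_of_mem_Icc ?_]
  · simp only [intervalIntegral.integral_div, intervalIntegral.intervalIntegrable_id,
      intervalIntegrable_const, intervalIntegral.integral_sub, integral_id,
      intervalIntegral.integral_const, smul_eq_mul]
    rw [mul_comm 2, ← div_div]
    ring
  · rw [uIcc_of_le hu.1] at hz
    exact ⟨hz.1, hz.2.trans hu.2⟩

lemma setIntegral_Iic_unifCDF_of_right_le (hab : a < b) {u : ℝ} (hu : b ≤ u) :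
    ∫ z in Iic u, unifCDF a b z = u - (a + b) / 2 := by
  rw [← sub_add_cancel (∫ z in Iic u, unifCDF a b z) (∫ z in Iic b, unifCDF a b z),
    intervalIntegral.integral_Iic_sub_Iic (integrableOn_unifCDF_Iic a b b)
      (integrableOn_unifCDF_Iic a b u),
    setIntegral_Iic_unifCDF_of_mem_Icc ⟨hab.le, le_rfl⟩,
    intervalIntegral.integral_congr (g := fun _ => 1) fun z hz => unifCDF_of_right_le hab ?_]
  · simp only [intervalIntegral.integral_const, smul_eq_mul, mul_one]
    field_simp
    ring
  · exact (uIcc_of_le hu ▸ hz).1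

lemma setIntegral_Iic_unifCDF_le {aX bX aY bY : ℝ} (hX : aX < bX) (hY : aY < bY)
    (ha : aY ≤ aX) (hm : (aY + bY) / 2 ≤ (aX + bX) / 2) (u : ℝ) :
    ∫ z in Iic u, unifCDF aX bX z ≤ ∫ z in Iic u, unifCDF aY bY z := by
  rcases le_total u aX with huX | huX
  · rw [setIntegral_Iic_unifCDF_of_le_left huX]
    exact setIntegral_nonneg measurableSet_Iic fun z _ => unifCDF_nonneg hY z
  have huY : aY ≤ u := ha.trans huX
  rcases le_total u bX with hubX | hubX <;> rcases le_total u bY with hubY | hubY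
  · rw [setIntegral_Iic_unifCDF_of_mem_Icc ⟨huX, hubX⟩,
      setIntegral_Iic_unifCDF_of_mem_Icc ⟨huY, hubY⟩, div_le_div_iff₀ (by linarith) (by linarith)]
    -- With `t = u - aX`, `d = aX - aY` and widths `wX`, `wY`, where `wY ≤ wX + 2d`:
    -- `t² wY ≤ t² (wX + 2d) ≤ t² wX + 2dt wX ≤ (t + d)² wX`.
    nlinarith [mul_nonneg (sq_nonneg (u - aX))
        (by linarith : 0 ≤ (bX - aX) + 2 * (aX - aY) - (bY - aY)),
      mul_nonneg (mul_nonneg (sub_nonneg.2 huX) (sub_nonneg.2 ha)) (sub_nonneg.2 hubX),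
      mul_nonneg (sq_nonneg (aX - aY)) (sub_nonneg.2 hX.le)]
  · rw [setIntegral_Iic_unifCDF_of_mem_Icc ⟨huX, hubX⟩,
      setIntegral_Iic_unifCDF_of_right_le hY hubY, div_le_iff₀ (by linarith)]
    nlinarith [mul_nonneg (sub_nonneg.2 hubX) (sub_nonneg.2 huX),
      mul_nonneg (sub_nonneg.2 hX.le) (by linarith : 0 ≤ (u - bY) + (aX - aY))]
  · rw [setIntegral_Iic_unifCDF_of_right_le hX hubX,
      setIntegral_Iic_unifCDF_of_mem_Icc ⟨huY, hubY⟩, le_div_iff₀ (by linarith)]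
    nlinarith [sq_nonneg (u - bY)]
  · rw [setIntegral_Iic_unifCDF_of_right_le hX hubX, setIntegral_Iic_unifCDF_of_right_le hY hubY]
    linarith

end Uniform

theorem ssd_uniform_iff (aX bX aY bY : ℝ) (hX : aX < bX) (hY : aY < bY) :
    SSD (unif aX bX) (unif aY bY) ↔ aY ≤ aX ∧ (aY + bY) / 2 ≤ (aX + bX) / 2 := by
  rw [ssd_iff_forall_setIntegral_cdf_le (cdf_unif hX ▸ integrableOn_unifCDF_Iic aX bX)
    (cdf_unif hY ▸ integrableOn_unifCDF_Iic aY bY), cdf_unif hX, cdf_unif hY]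
  refine ⟨fun h => ⟨?_, ?_⟩, fun ⟨ha, hm⟩ => setIntegral_Iic_unifCDF_le hX hY ha hm⟩
  · by_contra! hlt
    have hpos : 0 < (min aY bX - aX) ^ 2 / (2 * (bX - aX)) :=
      div_pos (pow_pos (sub_pos.2 (lt_min hlt hX)) 2) (by linarith)
    have := h (min aY bX)
    rw [setIntegral_Iic_unifCDF_of_le_left (min_le_left _ _),
      setIntegral_Iic_unifCDF_of_mem_Icc ⟨le_min hlt.le hX.le, min_le_right _ _⟩] at this
    linarith
  · have := h (max bX bY)
    rw [setIntegral_Iic_unifCDF_of_right_le hX (le_max_left _ _),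
      setIntegral_Iic_unifCDF_of_right_le hY (le_max_right _ _)] at this
    linarith
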